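/- arXiv:2204.03147 — 5 statements merged into one kernel-verified Lean document; each statement's English description precedes it below -/
import Mathlib

section
/- Let d ≥ 2 and N ≥ 3d be integers, let W = ([0,N] ∩ ℤ)^d, and let Ω be the set of pairs (v,w) ∈ W × W with gcd(v₁−w₁, …, v_d−w_d) = 1. Then there is an absolute constant C₀ > 0 such that |#Ω − N^{2d}/ζ(d)| ≤ C₀·N³·log N if d = 2, and |#Ω − N^{2d}/ζ(d)| ≤ C₀·d·N^{2d−1} if d ≥ 3. -/
/-!
Möbius inversion over the gcd `g` of the coordinate differences counts the visible pairs as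
`∑_{k ≤ N} μ(k) (c_k ^ d - M ^ d)`, where `M = N + 1` and `c_k` is the number of pairs
`(a, b) ∈ [0, M)²` with `a ≡ b (mod k)`; the term `M ^ d` removes the diagonal `v = w`, where
`g = 0`. Counting residue classes gives `k c_k = M² + s (k - s)` with `s = M % k`, so
`c_k = M² / k + O(k)` and `c_k ^ d = M ^ (2d) / k ^ d + O(d M ^ (2d - 2))`. The main term
`M ^ (2d) ∑_{k ≤ N} μ(k) / k ^ d` is `M ^ (2d) / ζ(d) + O(M ^ (2d) / N)`, and once `N ≥ 2d`
every error, including the replacement of `M` by `N`, is `O(d N ^ (2d - 1))`; for `d = 2` this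
is already `O(N³) ≤ O(N³ log N)`.
-/

open Finset ArithmeticFunction
open scoped ArithmeticFunction.Moebius

theorem ite_eq_one_eq_sum_moebius {n N : ℕ} (hn : n ≤ N) :
    (if n = 1 then 1 else 0 : ℤ) =
      ∑ k ∈ Icc 1 N, μ k * ((if k ∣ n then 1 else 0) - if n = 0 then 1 else 0) := by
  rcases eq_or_ne n 0 with rfl | hn0
  · simp
  have hdiv : {k ∈ Icc 1 N | k ∣ n} = n.divisors := by
    ext k
    simp only [mem_filter, mem_Icc, Nat.mem_divisors]
    have hpos := Nat.pos_of_ne_zero hn0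
    constructor
    · rintro ⟨-, hk⟩
      exact ⟨hk, hn0⟩
    · rintro ⟨hk, -⟩
      exact ⟨⟨Nat.pos_of_dvd_of_pos hk hpos, (Nat.le_of_dvd hpos hk).trans hn⟩, hk⟩
  simp only [hn0, if_false, sub_zero, mul_ite, mul_one, mul_zero]
  rw [← sum_filter, hdiv, ← coe_mul_zeta_apply, moebius_mul_coe_zeta, one_apply]

theorem card_filter_eq_one_eq_sum_moebius {α : Type*} [Fintype α] (g : α → ℕ) {N : ℕ}
    (hg : ∀ x, g x ≤ N) :
    (#{x | g x = 1} : ℤ) =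
      ∑ k ∈ Icc 1 N, μ k * ((#{x | k ∣ g x} : ℤ) - #{x | g x = 0}) := by
  simp only [natCast_card_filter, ← sum_sub_distrib, mul_sum]
  rw [sum_comm]
  exact sum_congr rfl fun x _ => ite_eq_one_eq_sum_moebius (hg x)

theorem card_pairs_filter_forall {ι α : Type*} [Fintype ι] [DecidableEq ι] [Fintype α]
    (Q : α → α → Prop) [DecidableRel Q] :
    #{p : (ι → α) × (ι → α) | ∀ i, Q (p.1 i) (p.2 i)} =
      #{q : α × α | Q q.1 q.2} ^ Fintype.card ι := by
  simp only [← Fintype.card_subtype, ← Fintype.card_fun]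
  exact Fintype.card_congr <|
    ((Equiv.arrowProdEquivProdArrow _ _ _).symm.subtypeEquiv fun _ => Iff.rfl).trans
      (Equiv.subtypePiEquivPi (p := fun _ q => Q q.1 q.2))

theorem card_filter_fst_eq_snd (α : Type*) [Fintype α] [DecidableEq α] :
    #{q : α × α | q.1 = q.2} = Fintype.card α := by
  rw [← card_univ, ← diag_card (univ : Finset α)]
  exact congrArg card (by ext q; simp [mem_diag])

theorem card_filter_fin_modEq (M k r : ℕ) :
    #{a : Fin M | (a : ℕ) ≡ r [MOD k]} = Nat.count (· ≡ r [MOD k]) M := by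
  rw [Nat.count_eq_card_filter_range, ← card_map Fin.valEmbedding, map_filter',
    Fin.map_valEmbedding_univ, Nat.Iio_eq_range]
  congr 1
  ext x
  simp only [Fin.valEmbedding_apply, mem_filter, mem_range, and_congr_right_iff]
  exact fun h => ⟨fun ⟨a, ha, hax⟩ => hax ▸ ha, fun hx => ⟨⟨x, h⟩, hx, rfl⟩⟩

def modEqPairCount (M k : ℕ) : ℕ := #{q : Fin M × Fin M | (q.1 : ℕ) ≡ q.2 [MOD k]}

theorem modEqPairCount_eq_sum_sq (M : ℕ) {k : ℕ} (hk : 0 < k) :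
    modEqPairCount M k = ∑ r ∈ range k, Nat.count (· ≡ r [MOD k]) M ^ 2 := by
  rw [modEqPairCount, card_eq_sum_card_fiberwise (f := fun q => (q.1 : ℕ) % k) (t := range k)
    fun q _ => mem_range.mpr (Nat.mod_lt _ hk)]
  refine sum_congr rfl fun r hr => ?_
  have hr : r % k = r := Nat.mod_eq_of_lt (mem_range.mp hr)
  rw [sq, ← card_filter_fin_modEq, ← card_product]
  congr 1
  ext q
  simp only [mem_filter, mem_univ, true_and, mem_product]
  unfold Nat.ModEq
  omega

theorem sum_range_add_ite_lt_sq (q : ℕ) {s k : ℕ} (hs : s ≤ k) :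
    ∑ r ∈ range k, (q + if r < s then 1 else 0) ^ 2 = k * q ^ 2 + (2 * q + 1) * s := by
  have hfilter : {r ∈ range k | r < s} = range s := by
    ext r
    simp only [mem_filter, mem_range]
    omega
  have hsq : ∀ r, (q + if r < s then 1 else 0) ^ 2 = q ^ 2 + if r < s then 2 * q + 1 else 0 := by
    intro r
    split_ifs <;> ring
  simp only [hsq, sum_add_distrib, sum_const, card_range, smul_eq_mul, ← sum_filter, hfilter,
    card_range]
  ring

theorem mul_modEqPairCount (M : ℕ) {k : ℕ} (hk : 0 < k) :
    k * modEqPairCount M k = M ^ 2 + M % k * (k - M % k) := by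
  have hcount : ∀ r ∈ range k,
      Nat.count (· ≡ r [MOD k]) M = M / k + if r < M % k then 1 else 0 :=
    fun r hr => by rw [Nat.count_modEq_card _ hk, Nat.mod_eq_of_lt (mem_range.mp hr)]
  rw [modEqPairCount_eq_sum_sq M hk, sum_congr rfl fun r hr => by rw [hcount r hr],
    sum_range_add_ite_lt_sq _ (Nat.mod_lt M hk).le]
  obtain ⟨t, ht⟩ := Nat.exists_eq_add_of_le (Nat.mod_lt M hk).le
  have hM := Nat.div_add_mod M k
  generalize M / k = q at hM ⊢
  generalize M % k = s at hM ht ⊢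
  subst hM ht
  rw [Nat.add_sub_cancel_left]
  ring

theorem modEqPairCount_le (M k : ℕ) : modEqPairCount M k ≤ M ^ 2 :=
  (card_filter_le _ _).trans_eq (by simp [sq])

theorem Finset.gcd_le_of_forall_le {ι : Type*} {s : Finset ι} {f : ι → ℕ} {N : ℕ}
    (h : ∀ i ∈ s, f i ≤ N) : s.gcd f ≤ N := by
  by_cases hzero : ∀ i ∈ s, f i = 0
  · rw [gcd_eq_zero_iff.mpr hzero]
    exact N.zero_le
  push Not at hzero
  obtain ⟨i, hi, hfi⟩ := hzero
  exact (Nat.le_of_dvd (Nat.pos_of_ne_zero hfi) (gcd_dvd hi)).trans (h i hi)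

theorem dvd_natAbs_sub_iff_modEq {k a b : ℕ} :
    k ∣ ((a : ℤ) - b).natAbs ↔ a ≡ b [MOD k] := by
  rw [← Int.natCast_dvd, Nat.ModEq.comm, Nat.modEq_iff_dvd]

theorem card_visiblePairs_eq_sum_moebius (ι : Type*) [Fintype ι] [DecidableEq ι] (N : ℕ) :
    (#{p : (ι → Fin (N + 1)) × (ι → Fin (N + 1)) |
        univ.gcd (fun i => (((p.1 i : ℕ) : ℤ) - ((p.2 i : ℕ) : ℤ)).natAbs) = 1} : ℝ) =
      ∑ k ∈ Icc 1 N, (μ k : ℝ) * ((modEqPairCount (N + 1) k : ℝ) ^ Fintype.card ι -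
        ((N : ℝ) + 1) ^ Fintype.card ι) := by
  have hle : ∀ p : (ι → Fin (N + 1)) × (ι → Fin (N + 1)),
      univ.gcd (fun i => (((p.1 i : ℕ) : ℤ) - ((p.2 i : ℕ) : ℤ)).natAbs) ≤ N :=
    fun p => gcd_le_of_forall_le fun i _ => by omega
  have hdvd : ∀ k, #{p : (ι → Fin (N + 1)) × (ι → Fin (N + 1)) |
      k ∣ univ.gcd (fun i => (((p.1 i : ℕ) : ℤ) - ((p.2 i : ℕ) : ℤ)).natAbs)} =
        modEqPairCount (N + 1) k ^ Fintype.card ι := by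
    intro k
    simp only [Finset.dvd_gcd_iff, mem_univ, true_implies, dvd_natAbs_sub_iff_modEq]
    exact card_pairs_filter_forall (fun a b : Fin (N + 1) => (a : ℕ) ≡ b [MOD k])
  have hzero : #{p : (ι → Fin (N + 1)) × (ι → Fin (N + 1)) |
      univ.gcd (fun i => (((p.1 i : ℕ) : ℤ) - ((p.2 i : ℕ) : ℤ)).natAbs) = 0} =
        (N + 1) ^ Fintype.card ι := by
    simp only [Finset.gcd_eq_zero_iff, mem_univ, true_implies, Int.natAbs_eq_zero, sub_eq_zero,
      Nat.cast_inj, Fin.val_inj]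
    rw [card_pairs_filter_forall (fun a b : Fin (N + 1) => a = b), card_filter_fst_eq_snd,
      Fintype.card_fin]
  have h := card_filter_eq_one_eq_sum_moebius _ hle
  rw [hzero] at h
  simp only [hdvd] at h
  exact_mod_cast h

theorem add_pow_le_three_mul_pow {x a : ℝ} (n : ℕ) (hx : 0 < x) (ha : 0 ≤ a)
    (h : n * a ≤ x) :
    (x + a) ^ n ≤ 3 * x ^ n := by
  have hexp : 1 + a / x ≤ Real.exp (a / x) := by linarith [Real.add_one_le_exp (a / x)]
  have hna : n * (a / x) ≤ 1 := by rw [← mul_div_assoc, div_le_one hx]; exact h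
  calc (x + a) ^ n = x ^ n * (1 + a / x) ^ n := by
        rw [← mul_pow, mul_add, mul_div_cancel₀ _ hx.ne', mul_one]
    _ ≤ x ^ n * Real.exp (n * (a / x)) := by
        rw [Real.exp_nat_mul]
        gcongr
    _ ≤ x ^ n * Real.exp 1 := by gcongr
    _ ≤ 3 * x ^ n := by
        rw [mul_comm]
        gcongr
        linarith [Real.exp_one_lt_d9]

theorem add_one_pow_le_three_mul_pow {N e : ℕ} (he : e ≤ N) :
    ((N : ℝ) + 1) ^ e ≤ 3 * (N : ℝ) ^ e := by
  rcases Nat.eq_zero_or_pos N with rfl | hN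
  · simp [Nat.le_zero.mp he]
  · exact add_pow_le_three_mul_pow e (by positivity) zero_le_one
      (by exact_mod_cast by simpa using he)

theorem abs_add_one_pow_sub_pow_le {N n : ℕ} (hn : n ≤ N + 1) :
    |((N : ℝ) + 1) ^ n - (N : ℝ) ^ n| ≤ 3 * n * (N : ℝ) ^ (n - 1) := by
  have hN : (0 : ℝ) ≤ N := N.cast_nonneg
  refine (abs_pow_sub_pow_le _ _ _).trans ?_
  rw [add_sub_cancel_left, abs_one, one_mul, abs_of_nonneg hN, abs_of_nonneg (by linarith),
    max_eq_left (by linarith), mul_comm 3, mul_assoc]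
  gcongr
  exact add_one_pow_le_three_mul_pow (by omega)

theorem LSeries_ofReal_natCast_pow (f : ℕ → ℝ) {d : ℕ} (hd : d ≠ 0) :
    LSeries (fun n => (f n : ℂ)) d = ((∑' n : ℕ, f n / (n : ℝ) ^ d : ℝ) : ℂ) := by
  rw [LSeries, Complex.ofReal_tsum]
  refine tsum_congr fun n => ?_
  rw [LSeries.term_def, Complex.cpow_natCast]
  split_ifs with hn
  · simp [hn, hd]
  · push_cast
    rfl

theorem summable_one_div_add_one_pow {d : ℕ} (hd : 2 ≤ d) :
    Summable fun n : ℕ => 1 / ((n : ℝ) + 1) ^ d := by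
  simpa using (summable_nat_add_iff 1).mpr (Real.summable_one_div_nat_pow.mpr hd)

theorem one_le_tsum_one_div_add_one_pow {d : ℕ} (hd : 2 ≤ d) :
    1 ≤ ∑' n : ℕ, 1 / ((n : ℝ) + 1) ^ d := by
  simpa using (summable_one_div_add_one_pow hd).le_tsum 0 fun n _ => by positivity

theorem tsum_one_div_add_one_pow_mul_tsum_moebius {d : ℕ} (hd : 2 ≤ d) :
    (∑' n : ℕ, 1 / ((n : ℝ) + 1) ^ d) * ∑' k : ℕ, (μ k : ℝ) / (k : ℝ) ^ d = 1 := by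
  have hs : 1 < (d : ℂ).re := by simp; omega
  have hd0 : d ≠ 0 := by omega
  have h := LSeries_one_mul_Lseries_moebius hs
  have hone : LSeries 1 d = ((∑' n : ℕ, 1 / ((n : ℝ) + 1) ^ d : ℝ) : ℂ) := by
    rw [show (1 : ℕ → ℂ) = fun n => ((1 : ℝ) : ℂ) by ext; simp,
      LSeries_ofReal_natCast_pow _ hd0, (Real.summable_one_div_nat_pow.mpr hd).tsum_eq_zero_add]
    simp [hd0]
  rw [hone, show (fun n => ((μ n : ℤ) : ℂ)) = fun n => (((μ n : ℝ)) : ℂ) by simp,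
    LSeries_ofReal_natCast_pow _ hd0] at h
  exact_mod_cast h

theorem abs_sum_Icc_sub_tsum_div_pow_le {a : ℕ → ℝ} (ha : ∀ k, |a k| ≤ 1) {d N : ℕ}
    (hd : 2 ≤ d) (hN : 1 ≤ N) :
    |∑ k ∈ Icc 1 N, a k / (k : ℝ) ^ d - ∑' k : ℕ, a k / (k : ℝ) ^ d| ≤ 1 / N := by
  set f : ℕ → ℝ := fun k => a k / (k : ℝ) ^ d
  have hf : Summable f := by
    refine (Real.summable_one_div_nat_pow.mpr hd).of_norm_bounded fun k => ?_
    rw [Real.norm_eq_abs, abs_div, abs_pow, Nat.abs_cast]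
    exact div_le_div_of_nonneg_right (ha k) (by positivity)
  set g : ℕ → ℝ := fun i => 1 / ((i : ℝ) + N) - 1 / ((i + 1 : ℕ) + N)
  have hN' : (1 : ℝ) ≤ N := by exact_mod_cast hN
  have hg0 : ∀ i, 0 ≤ g i := fun i => by
    simp only [g, sub_nonneg]
    gcongr
    exact i.le_succ
  have hg_sum : ∀ n, ∑ i ∈ range n, g i ≤ 1 / N := fun n => by
    rw [sum_range_sub' (fun i : ℕ => 1 / ((i : ℝ) + N)) n]
    simp only [Nat.cast_zero, zero_add, sub_le_self_iff]
    positivity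
  have hg : Summable g := summable_of_sum_range_le hg0 hg_sum
  have htail : ∀ i, ‖f (i + (N + 1))‖ ≤ g i := fun i => by
    have hx : (1 : ℝ) ≤ (i : ℝ) + N := by linarith [(i.cast_nonneg : (0 : ℝ) ≤ i)]
    have hpow : ((i : ℝ) + N) * ((i : ℝ) + N + 1) ≤ ((i : ℝ) + N + 1) ^ d :=
      calc ((i : ℝ) + N) * ((i : ℝ) + N + 1) ≤ ((i : ℝ) + N + 1) ^ 2 := by nlinarith
        _ ≤ _ := pow_le_pow_right₀ (by linarith) hd
    simp only [f, g, Real.norm_eq_abs, abs_div, abs_pow]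
    push_cast
    rw [show |(i : ℝ) + (N + 1)| = (i : ℝ) + N + 1 by rw [abs_of_pos (by positivity)]; ring]
    calc |a (i + (N + 1))| / ((i : ℝ) + N + 1) ^ d
        ≤ 1 / (((i : ℝ) + N) * ((i : ℝ) + N + 1)) :=
          div_le_div₀ zero_le_one (ha _) (by positivity) hpow
      _ = _ := by field_simp; ring
  have hf0 : f 0 = 0 := by simp [f, show d ≠ 0 by omega]
  rw [← hf.sum_add_tsum_nat_add (N + 1), range_eq_Ico, sum_eq_sum_Ico_succ_bot (by omega), hf0,
    zero_add, Ico_add_one_right_eq_Icc, sub_add_cancel_left, abs_neg]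
  exact (tsum_of_norm_bounded hg.hasSum htail).trans (Real.tsum_le_of_sum_range_le hg0 hg_sum)

theorem abs_sum_moebius_mul_le (s : Finset ℕ) (f : ℕ → ℝ) {B : ℝ}
    (hf : ∀ k ∈ s, |f k| ≤ B) :
    |∑ k ∈ s, (μ k : ℝ) * f k| ≤ #s * B := by
  refine (abs_sum_le_sum_abs _ _).trans ?_
  rw [← nsmul_eq_mul]
  refine sum_le_card_nsmul _ _ _ fun k hk => ?_
  rw [abs_mul]
  exact (mul_le_of_le_one_left (abs_nonneg _) (by exact_mod_cast abs_moebius_le_one)).trans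
    (hf k hk)

theorem abs_sum_Icc_moebius_le (N : ℕ) : |∑ k ∈ Icc 1 N, (μ k : ℝ)| ≤ N := by
  simpa using abs_sum_moebius_mul_le (Icc 1 N) (fun _ => 1) (B := 1) fun _ _ => by simp

theorem abs_sum_Icc_moebius_div_pow_sub_le {d N : ℕ} (hd : 2 ≤ d) (hN : 1 ≤ N) :
    |∑ k ∈ Icc 1 N, (μ k : ℝ) / (k : ℝ) ^ d - 1 / ∑' n : ℕ, 1 / ((n : ℝ) + 1) ^ d|
      ≤ 1 / N := by
  rw [← eq_one_div_of_mul_eq_one_right (tsum_one_div_add_one_pow_mul_tsum_moebius hd)]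
  exact abs_sum_Icc_sub_tsum_div_pow_le (fun k => by exact_mod_cast abs_moebius_le_one) hd hN

theorem abs_modEqPairCount_pow_sub_le {M k d : ℕ} (hk : 0 < k) (hkM : k ≤ M) (hd : 2 ≤ d) :
    |(modEqPairCount M k : ℝ) ^ d - ((M : ℝ) ^ 2 / k) ^ d| ≤
      2 * d * (M : ℝ) ^ (2 * d - 2) := by
  set c := modEqPairCount M k
  have hlower : M ^ 2 ≤ k * c := by
    rw [mul_modEqPairCount M hk]
    exact Nat.le_add_right _ _
  have hupper : k * c ≤ M ^ 2 + k ^ 2 := by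
    rw [mul_modEqPairCount M hk, sq k]
    gcongr
    exacts [(Nat.mod_lt M hk).le, Nat.sub_le k _]
  have hk' : (0 : ℝ) < k := by exact_mod_cast hk
  have hy : (M : ℝ) ^ 2 / k ≤ c := by
    rw [div_le_iff₀ hk', mul_comm]
    exact_mod_cast hlower
  have hcy : (c : ℝ) - (M : ℝ) ^ 2 / k ≤ k := by
    have : (k : ℝ) * c ≤ (M : ℝ) ^ 2 + (k : ℝ) ^ 2 := by exact_mod_cast hupper
    rw [sub_le_iff_le_add', div_add' _ _ _ hk'.ne', le_div_iff₀ hk']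
    linarith
  have hkc : (k : ℝ) * c ≤ 2 * (M : ℝ) ^ 2 := by
    have : k * c ≤ 2 * M ^ 2 := by nlinarith
    exact_mod_cast this
  have hcM : (c : ℝ) ≤ (M : ℝ) ^ 2 := by exact_mod_cast modEqPairCount_le M k
  have hy0 : 0 ≤ (M : ℝ) ^ 2 / k := by positivity
  obtain ⟨e, rfl⟩ := Nat.exists_eq_add_of_le hd
  calc |(c : ℝ) ^ (2 + e) - ((M : ℝ) ^ 2 / k) ^ (2 + e)|
      ≤ |(c : ℝ) - (M : ℝ) ^ 2 / k| * (2 + e : ℕ) *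
          max |(c : ℝ)| |(M : ℝ) ^ 2 / k| ^ (2 + e - 1) :=
        abs_pow_sub_pow_le _ _ _
    _ ≤ k * (2 + e : ℕ) * (c : ℝ) ^ (1 + e) := by
        rw [abs_of_nonneg (sub_nonneg.mpr hy), abs_of_nonneg hy0, Nat.abs_cast, max_eq_left hy,
          show 2 + e - 1 = 1 + e by omega]
        gcongr
    _ = (2 + e : ℕ) * ((k * c) * (c : ℝ) ^ e) := by ring
    _ ≤ (2 + e : ℕ) * ((2 * (M : ℝ) ^ 2) * ((M : ℝ) ^ 2) ^ e) := by gcongr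
    _ = 2 * (2 + e : ℕ) * (M : ℝ) ^ (2 * (2 + e) - 2) := by
        rw [show 2 * (2 + e) - 2 = 2 + 2 * e by omega, pow_add, pow_mul]
        ring

theorem abs_sum_moebius_mul_modEqPairCount_pow_sub_le {d N : ℕ} (hd : 2 ≤ d)
    (hN : 2 * d ≤ N) :
    |∑ k ∈ Icc 1 N, (μ k : ℝ) *
        ((modEqPairCount (N + 1) k : ℝ) ^ d - (((N : ℝ) + 1) ^ 2 / k) ^ d)| ≤
      6 * d * (N : ℝ) ^ (2 * d - 1) := by
  refine (abs_sum_moebius_mul_le _ _ (B := 2 * d * ((N : ℝ) + 1) ^ (2 * d - 2))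
    fun k hk => ?_).trans ?_
  · simpa using abs_modEqPairCount_pow_sub_le (M := N + 1) (mem_Icc.mp hk).1
      (by linarith [(mem_Icc.mp hk).2]) hd
  rw [Nat.card_Icc, Nat.add_sub_cancel, ← pow_sub_one_mul (by omega : 2 * d - 1 ≠ 0),
    show 2 * d - 1 - 1 = 2 * d - 2 by omega]
  calc (N : ℝ) * (2 * d * ((N : ℝ) + 1) ^ (2 * d - 2))
      ≤ N * (2 * d * (3 * (N : ℝ) ^ (2 * d - 2))) := by
        gcongr
        exact add_one_pow_le_three_mul_pow (by omega)
    _ = 6 * d * ((N : ℝ) ^ (2 * d - 2) * N) := by ring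

theorem abs_add_one_pow_mul_sum_moebius_div_pow_sub_le {d N : ℕ} (hd : 2 ≤ d)
    (hN : 2 * d ≤ N) :
    |((N : ℝ) + 1) ^ (2 * d) *
        (∑ k ∈ Icc 1 N, (μ k : ℝ) / (k : ℝ) ^ d - 1 / ∑' n : ℕ, 1 / ((n : ℝ) + 1) ^ d)| ≤
      3 * (N : ℝ) ^ (2 * d - 1) := by
  have hN0 : (N : ℝ) ≠ 0 := by exact_mod_cast (by omega : N ≠ 0)
  rw [abs_mul, abs_of_pos (by positivity)]
  calc ((N : ℝ) + 1) ^ (2 * d) *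
        |∑ k ∈ Icc 1 N, (μ k : ℝ) / (k : ℝ) ^ d - 1 / ∑' n : ℕ, 1 / ((n : ℝ) + 1) ^ d|
      ≤ 3 * (N : ℝ) ^ (2 * d) * (1 / N) :=
        mul_le_mul (add_one_pow_le_three_mul_pow (by omega))
          (abs_sum_Icc_moebius_div_pow_sub_le hd (by omega)) (abs_nonneg _) (by positivity)
    _ = 3 * (N : ℝ) ^ (2 * d - 1) := by
        rw [← pow_sub_one_mul (by omega : 2 * d ≠ 0) (N : ℝ)]
        field_simp

theorem abs_card_visiblePairs_sub_le {d N : ℕ} (hd : 2 ≤ d) (hN : 2 * d ≤ N) :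
    |(#{p : (Fin d → Fin (N + 1)) × (Fin d → Fin (N + 1)) |
        univ.gcd (fun i => (((p.1 i : ℕ) : ℤ) - ((p.2 i : ℕ) : ℤ)).natAbs) = 1} : ℝ) -
      (N : ℝ) ^ (2 * d) / ∑' n : ℕ, 1 / ((n : ℝ) + 1) ^ d| ≤
      15 * d * (N : ℝ) ^ (2 * d - 1) := by
  rw [card_visiblePairs_eq_sum_moebius, Fintype.card_fin]
  set Z := ∑' n : ℕ, 1 / ((n : ℝ) + 1) ^ d
  set S := ∑ k ∈ Icc 1 N, (μ k : ℝ) / (k : ℝ) ^ d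
  set M : ℝ := N + 1
  have hZ : 1 ≤ Z := one_le_tsum_one_div_add_one_pow hd
  have hsplit : ∑ k ∈ Icc 1 N, (μ k : ℝ) * ((modEqPairCount (N + 1) k : ℝ) ^ d - M ^ d) -
      (N : ℝ) ^ (2 * d) / Z =
      ∑ k ∈ Icc 1 N, (μ k : ℝ) * ((modEqPairCount (N + 1) k : ℝ) ^ d - (M ^ 2 / k) ^ d) +
        M ^ (2 * d) * (S - 1 / Z) - M ^ d * ∑ k ∈ Icc 1 N, (μ k : ℝ) +
        (M ^ (2 * d) - (N : ℝ) ^ (2 * d)) / Z := by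
    have hS : ∑ k ∈ Icc 1 N, (μ k : ℝ) * (M ^ 2 / k) ^ d = M ^ (2 * d) * S := by
      simp only [S, mul_sum, div_pow, ← pow_mul]
      exact sum_congr rfl fun k _ => by ring
    simp only [mul_sub, sum_sub_distrib, hS, ← sum_mul]
    ring
  have h1 := abs_sum_moebius_mul_modEqPairCount_pow_sub_le hd hN
  have h2 := abs_add_one_pow_mul_sum_moebius_div_pow_sub_le hd hN
  have h3 : |M ^ d * ∑ k ∈ Icc 1 N, (μ k : ℝ)| ≤ 3 * (N : ℝ) ^ (2 * d - 1) := by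
    have hN1 : (1 : ℝ) ≤ N := by exact_mod_cast (by omega : 1 ≤ N)
    rw [abs_mul, abs_of_pos (by positivity)]
    calc M ^ d * |∑ k ∈ Icc 1 N, (μ k : ℝ)| ≤ 3 * (N : ℝ) ^ d * N :=
          mul_le_mul (add_one_pow_le_three_mul_pow (by omega)) (abs_sum_Icc_moebius_le N)
            (abs_nonneg _) (by positivity)
      _ = 3 * (N : ℝ) ^ (d + 1) := by ring
      _ ≤ 3 * (N : ℝ) ^ (2 * d - 1) := by gcongr; omega
  have h4 : |(M ^ (2 * d) - (N : ℝ) ^ (2 * d)) / Z| ≤ 6 * d * (N : ℝ) ^ (2 * d - 1) := by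
    rw [abs_div, abs_of_pos (show 0 < Z by linarith)]
    refine (div_le_self (abs_nonneg _) hZ).trans
      ((abs_add_one_pow_sub_pow_le (by omega)).trans_eq ?_)
    push_cast
    ring
  rw [hsplit]
  refine (abs_add_le _ _).trans <|
    (add_le_add ((abs_sub _ _).trans <| add_le_add (abs_add_le _ _) le_rfl) le_rfl).trans ?_
  have hd' : (2 : ℝ) ≤ d := by exact_mod_cast hd
  nlinarith [(pow_nonneg N.cast_nonneg (2 * d - 1) : (0 : ℝ) ≤ (N : ℝ) ^ (2 * d - 1))]

/-- count of mutually visible pairs in the hypercube lattice. -/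
theorem visible_pairs_count :
    ∃ C₀ : ℝ, 0 < C₀ ∧ ∀ d N : ℕ, 2 ≤ d → 3 * d ≤ N →
      |((Finset.univ.filter (fun p : (Fin d → Fin (N + 1)) × (Fin d → Fin (N + 1)) =>
           Finset.univ.gcd (fun i => (((p.1 i : ℕ) : ℤ) - ((p.2 i : ℕ) : ℤ)).natAbs) = 1)).card : ℝ)
        - (N : ℝ) ^ (2 * d) / (∑' n : ℕ, 1 / ((n : ℝ) + 1) ^ d)| ≤
      if d = 2 then C₀ * (N : ℝ) ^ 3 * Real.log N else C₀ * d * (N : ℝ) ^ (2 * d - 1) := by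
  refine ⟨30, by norm_num, fun d N hd hN => ?_⟩
  have h := abs_card_visiblePairs_sub_le (N := N) hd (by omega)
  split_ifs with hd2
  · subst hd2
    have hlog : 1 ≤ Real.log N := by
      rw [Real.le_log_iff_exp_le (by norm_cast; omega)]
      have : (6 : ℝ) ≤ N := by exact_mod_cast (show 6 ≤ N by omega)
      linarith [Real.exp_one_lt_d9]
    calc _ ≤ 15 * ((2 : ℕ) : ℝ) * (N : ℝ) ^ (2 * 2 - 1) := h
      _ = 30 * (N : ℝ) ^ 3 * 1 := by norm_num
      _ ≤ 30 * (N : ℝ) ^ 3 * Real.log N := by gcongr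
  · exact h.trans (by gcongr; norm_num)
end

section
/- Let p be a prime, let d = p−1, and let v, w ∈ {0,1,…,d}^{d+1} be vectors whose coordinates are each a permutation of {0,1,…,d}, with the coordinates of w a (nontrivial) cyclic rotation of the coordinates of v. Then gcd(v₀−w₀, v₁−w₁, …, v_d−w_d) = 1. -/
/-!
Let `g` be the gcd. Reduced modulo `g`, the vector `v` is invariant under the rotation by `s`,
hence under every multiple of it. Since `p` is prime, `s ≠ 0` generates `ℤ/p`, so `v` is
constant modulo `g`; as `v` takes the values `0` and `1`, this forces `g ∣ 1`.
-/

theorem Function.Periodic.eq_of_zmultiples_eq_top {G α : Type*} [AddGroup G] {f : G → α} {s : G}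
    (hf : Function.Periodic f s) (hs : AddSubgroup.zmultiples s = ⊤) (x y : G) : f x = f y := by
  obtain ⟨k, hk⟩ := AddSubgroup.mem_zmultiples_iff.mp (hs ▸ AddSubgroup.mem_top (-y + x))
  rw [← add_neg_cancel_left y x, ← hk]
  exact hf.zsmul k y

theorem Fin.zmultiples_eq_top_of_prime {p : ℕ} [Fact p.Prime] {s : Fin p} (hs : s ≠ 0) :
    AddSubgroup.zmultiples s = ⊤ :=
  zmultiples_eq_top_of_prime_card (p := p) (by simp) hs

theorem Finset.gcd_natAbs_sub_shift_eq_one {G : Type*} [AddGroup G] [Fintype G] {u : G → ℤ}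
    {s : G} (hs : AddSubgroup.zmultiples s = ⊤) {a b : G} (hab : u b - u a = 1) :
    Finset.univ.gcd (fun i => (u (i + s) - u i).natAbs) = 1 := by
  set g := Finset.univ.gcd (fun i => (u (i + s) - u i).natAbs)
  have hperiodic : Function.Periodic (fun i => (u i : ZMod g)) s := fun i =>
    ((ZMod.intCast_eq_intCast_iff_dvd_sub _ _ g).mpr <|
      Int.natCast_dvd.mpr (Finset.gcd_dvd (Finset.mem_univ i))).symm
  have hdvd : (g : ℤ) ∣ u b - u a :=
    (ZMod.intCast_eq_intCast_iff_dvd_sub _ _ g).mp (hperiodic.eq_of_zmultiples_eq_top hs a b)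
  rw [hab] at hdvd
  exact Nat.dvd_one.mp (Int.natCast_dvd_natCast.mp hdvd)

/-- if the coordinates of w are a nontrivial cyclic rotation of the
coordinates of a permutation vector v (entries enumerating {0,…,p−1}, p prime), then
the gcd of the coordinatewise differences equals 1. -/
theorem gcd_diff_cyclic_rotation_eq_one (p : ℕ) (hp : p.Prime)
    (v : Equiv.Perm (Fin p)) (s : Fin p) (hs : s.val ≠ 0) :
    Finset.univ.gcd (fun i : Fin p => (((v (i + s) : ℕ) : ℤ) - ((v i : ℕ) : ℤ)).natAbs) = 1 := by
  have : Fact p.Prime := ⟨hp⟩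
  have : NeZero p := ⟨hp.ne_zero⟩
  let zero : Fin p := ⟨0, hp.pos⟩
  let one : Fin p := ⟨1, hp.one_lt⟩
  refine Finset.gcd_natAbs_sub_shift_eq_one (u := fun i => ((v i : ℕ) : ℤ))
    (Fin.zmultiples_eq_top_of_prime (Fin.val_ne_zero_iff.mp hs))
    (a := v.symm zero) (b := v.symm one) ?_
  simp [zero, one]
end

section
/- Let p be a prime. Then the number of distinct values of |n − n⁻¹| as n ranges over 1 ≤ n ≤ p−1 equals ⌊p/4⌋ + 1, where n⁻¹ is the representative in {1,…,p−1} of the inverse of n modulo p. -/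
/-!
Write `D(u) = u.val - (u⁻¹).val ∈ ℤ` for a unit `u` of `ZMod p`. Since `(-u).val = p - u.val`, both
`u ↦ u⁻¹` and `u ↦ -u` change the sign of `D`, so `|D|` is constant on the orbits of the Klein
four-group they generate. Conversely `|D u| = |D v|` gives `u - u⁻¹ = ±(v - v⁻¹)` in `ZMod p`, and
`x - x⁻¹ = a - a⁻¹` has only the roots `x = a` and `x = -a⁻¹`; so the values of `|D|` correspond
to the orbits. Burnside's lemma counts them: `4 · #orbits = (p - 1) + #{u² = 1} + #{-u = u} +
#{u² = -1} = (p - 1) + 2 + 0 + (1 + χ₄ p)`.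
-/

open MulAction Finset

section SignInvAction

variable {R : Type*} [CommRing R]

/-- `(ε, δ) • u = ε * u ^ δ`: the Klein four-group generated by `u ↦ -u` and `u ↦ u⁻¹`. -/
instance : MulAction (ℤˣ × ℤˣ) Rˣ where
  smul g u := Units.map (Int.castRingHom R).toMonoidHom g.1 * u ^ (g.2 : ℤ)
  one_smul u := by change _ * _ = _; simp
  mul_smul := by
    rintro ⟨ε₁, δ₁⟩ ⟨ε₂, δ₂⟩ u
    change _ * _ = _ * (_ * _) ^ _
    rcases Int.units_eq_one_or ε₂ with rfl | rfl <;>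
      rcases Int.units_eq_one_or δ₁ with rfl | rfl <;> simp

theorem Units.smul_signInv_def (g : ℤˣ × ℤˣ) (u : Rˣ) :
    g • u = Units.map (Int.castRingHom R).toMonoidHom g.1 * u ^ (g.2 : ℤ) := rfl

theorem Units.mem_orbit_signInv_iff {u v : Rˣ} :
    v ∈ orbit (ℤˣ × ℤˣ) u ↔ v = u ∨ v = u⁻¹ ∨ v = -u ∨ v = -u⁻¹ := by
  constructor
  · rintro ⟨⟨ε, δ⟩, rfl⟩
    rcases Int.units_eq_one_or ε with rfl | rfl <;>
      rcases Int.units_eq_one_or δ with rfl | rfl <;> simp [Units.smul_signInv_def]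
  · rintro (rfl | rfl | rfl | rfl)
    · exact ⟨(1, 1), by simp [Units.smul_signInv_def]⟩
    · exact ⟨(1, -1), by simp [Units.smul_signInv_def]⟩
    · exact ⟨(-1, 1), by simp [Units.smul_signInv_def]⟩
    · exact ⟨(-1, -1), by simp [Units.smul_signInv_def]⟩

theorem Units.fixedBy_signInv_one_neg : fixedBy Rˣ ((1, -1) : ℤˣ × ℤˣ) = {u | u ^ 2 = 1} := by
  ext u
  simp [Units.smul_signInv_def, inv_eq_iff_mul_eq_one, sq]

theorem Units.fixedBy_signInv_neg_one : fixedBy Rˣ ((-1, 1) : ℤˣ × ℤˣ) = {u | -u = u} := by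
  ext u
  simp [Units.smul_signInv_def]

theorem Units.fixedBy_signInv_neg_neg : fixedBy Rˣ ((-1, -1) : ℤˣ × ℤˣ) = {u | u ^ 2 = -1} := by
  ext u
  simp [Units.smul_signInv_def, neg_eq_iff_eq_neg, inv_eq_iff_mul_eq_one, sq]

end SignInvAction

theorem sub_inv_eq_sub_inv_iff {F : Type*} [Field F] {x a : F} (hx : x ≠ 0) (ha : a ≠ 0) :
    x - x⁻¹ = a - a⁻¹ ↔ x = a ∨ x = -a⁻¹ := by
  rw [← sub_eq_zero (a := x), ← add_eq_zero_iff_eq_neg, ← mul_eq_zero]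
  constructor <;> intro h
  · linear_combination x * h + mul_inv_cancel₀ hx - mul_inv_cancel₀ ha
  · field_simp at h ⊢
    linear_combination h

theorem Units.neg_ne_self {R : Type*} [Ring R] [IsDomain R] (hR : ringChar R ≠ 2) (u : Rˣ) :
    -u ≠ u := fun h =>
  u.ne_zero <| (Ring.eq_self_iff_eq_zero_of_char_ne_two hR).mp <| by
    simpa using congrArg Units.val h

section FiniteField

variable {F : Type*} [Field F] [Fintype F] [DecidableEq F]

theorem Units.quadraticChar_ncard_sqrts (hF : ringChar F ≠ 2) (c : Fˣ) :
    ({u : Fˣ | u ^ 2 = c}.ncard : ℤ) = quadraticChar F c + 1 := by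
  have hval : Units.val '' {u : Fˣ | u ^ 2 = c} = {x : F | x ^ 2 = c} := by
    ext x
    constructor
    · rintro ⟨u, hu, rfl⟩
      rw [Set.mem_ofPred_eq] at hu
      rw [Set.mem_ofPred_eq, ← hu, Units.val_pow_eq_pow_val]
    · intro hx
      have hx0 : x ≠ 0 := by rintro rfl; exact c.ne_zero (by simpa using hx.symm)
      exact ⟨Units.mk0 x hx0, by ext; simpa using hx, rfl⟩
  rw [← Set.ncard_image_of_injective _ Units.val_injective, hval, ← quadraticChar_card_sqrts hF,
    Set.ncard_eq_toFinset_card']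

theorem card_orbits_signInv_mul_four (hF : ringChar F ≠ 2) :
    (Nat.card (Quotient (orbitRel (ℤˣ × ℤˣ) Fˣ)) * 4 : ℤ) =
      Fintype.card F + 2 + ZMod.χ₄ (Fintype.card F) := by
  classical
  have burnside := sum_card_fixedBy_eq_card_orbits_mul_card_group (ℤˣ × ℤˣ) Fˣ
  simp only [Fintype.sum_prod_type, UnitsInt.univ, Finset.sum_pair (by decide : (1 : ℤˣ) ≠ -1),
    Prod.mk_one_one, fixedBy_one_eq_univ, Units.fixedBy_signInv_one_neg,
    Units.fixedBy_signInv_neg_one, Units.fixedBy_signInv_neg_neg, Fintype.card_eq_nat_card,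
    Nat.card_coe_set_eq, Set.ncard_univ] at burnside
  have h_group : Nat.card (ℤˣ × ℤˣ) = 4 := by rw [Nat.card_eq_fintype_card]; rfl
  have h_units : Fintype.card F = Nat.card Fˣ + 1 := by
    rw [Fintype.card_eq_card_units_add_one, Fintype.card_eq_nat_card]
  have h_inv : ({u : Fˣ | u ^ 2 = 1}.ncard : ℤ) = 2 := by
    rw [Units.quadraticChar_ncard_sqrts hF, Units.val_one, MulChar.map_one]; rfl
  have h_neg : {u : Fˣ | -u = u}.ncard = 0 := by simp [Units.neg_ne_self hF]
  have h_neg_inv : ({u : Fˣ | u ^ 2 = -1}.ncard : ℤ) = ZMod.χ₄ (Fintype.card F) + 1 := by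
    rw [Units.quadraticChar_ncard_sqrts hF, Units.val_neg, Units.val_one, quadraticChar_neg_one hF]
  rw [h_group] at burnside
  omega

end FiniteField

theorem MulAction.card_image_eq_card_orbits {G X β : Type*} [Group G] [MulAction G X] [Fintype X]
    [DecidableEq β] (f : X → β) (hf : ∀ x y, f x = f y ↔ x ∈ orbit G y) :
    #(univ.image f) = Nat.card (Quotient (orbitRel G X)) := by
  have hker : Setoid.ker f = orbitRel G X :=
    Setoid.ext fun x y => (hf x y).trans orbitRel_apply.symm
  rw [← hker, Nat.card_congr (Setoid.quotientKerEquivRange f), ← Set.ncard_coe_finset,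
    coe_image, coe_univ, Set.image_univ, Nat.card_coe_set_eq]

namespace ZMod

variable {p : ℕ}

def valSubInvVal (x : ZMod p) : ℤ := x.val - x⁻¹.val

variable [Fact p.Prime]

theorem valSubInvVal_inv (x : ZMod p) : valSubInvVal x⁻¹ = -valSubInvVal x := by
  rw [valSubInvVal, valSubInvVal, inv_inv, neg_sub]

theorem valSubInvVal_neg {x : ZMod p} (hx : x ≠ 0) : valSubInvVal (-x) = -valSubInvVal x := by
  have hx' : x⁻¹ ≠ 0 := inv_ne_zero hx
  simp only [valSubInvVal, inv_neg, neg_val, hx, hx', if_false]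
  rw [Nat.cast_sub x.val_lt.le, Nat.cast_sub x⁻¹.val_lt.le]
  ring

theorem intCast_valSubInvVal (x : ZMod p) : (valSubInvVal x : ZMod p) = x - x⁻¹ := by
  simp [valSubInvVal]

theorem natAbs_valSubInvVal_eq_iff {u v : (ZMod p)ˣ} :
    (valSubInvVal (v : ZMod p)).natAbs = (valSubInvVal (u : ZMod p)).natAbs ↔
      v ∈ orbit (ℤˣ × ℤˣ) u := by
  have hu_inv : (u : ZMod p)⁻¹ ≠ 0 := inv_ne_zero u.ne_zero
  rw [Units.mem_orbit_signInv_iff, Int.natAbs_eq_natAbs_iff, ← valSubInvVal_inv]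
  constructor
  · rintro (h | h) <;> have h := congrArg (Int.cast : ℤ → ZMod p) h <;>
      simp only [intCast_valSubInvVal] at h
    · rcases (sub_inv_eq_sub_inv_iff v.ne_zero u.ne_zero).mp h with h | h
      · exact .inl (Units.ext h)
      · exact .inr (.inr (.inr (Units.ext (by rw [h, Units.val_neg, Units.val_inv_eq_inv_val]))))
    · rcases (sub_inv_eq_sub_inv_iff v.ne_zero hu_inv).mp h with h | h
      · exact .inr (.inl (Units.ext (by rw [h, Units.val_inv_eq_inv_val])))
      · exact .inr (.inr (.inl (Units.ext (by rw [h, inv_inv, Units.val_neg]))))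
  · rintro (rfl | rfl | rfl | rfl)
    · exact .inl rfl
    · exact .inr (by rw [Units.val_inv_eq_inv_val])
    · exact .inr (by rw [Units.val_neg, valSubInvVal_neg u.ne_zero, valSubInvVal_inv])
    · exact .inl (by rw [Units.val_neg, Units.val_inv_eq_inv_val, valSubInvVal_neg hu_inv,
        valSubInvVal_inv, neg_neg])

theorem image_units_val : univ.image (fun u : (ZMod p)ˣ => (u : ZMod p).val) = Icc 1 (p - 1) := by
  have hp := (Fact.out : p.Prime).two_le
  ext n
  simp only [mem_image, mem_univ, true_and, mem_Icc]
  constructor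
  · rintro ⟨u, rfl⟩
    have h_lt := (u : ZMod p).val_lt
    have h_pos := (val_pos (n := p)).mpr u.ne_zero
    omega
  · rintro ⟨h1, h2⟩
    have hn : (n : ZMod p).val = n := val_cast_of_lt (by omega)
    refine ⟨Units.mk0 (n : ZMod p) fun h => ?_, hn⟩
    rw [← hn, h, val_zero] at h1
    omega

theorem image_Icc_natAbs_sub_inv_val :
    (Icc 1 (p - 1)).image (fun n : ℕ => ((n : ℤ) - (((n : ZMod p)⁻¹).val : ℤ)).natAbs) =
      univ.image (fun u : (ZMod p)ˣ => (valSubInvVal (u : ZMod p)).natAbs) := by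
  rw [← image_units_val, image_image]
  congr 1
  ext u
  simp only [Function.comp_apply, natCast_zmod_val, valSubInvVal]

end ZMod

/-- the number of distinct values of |n − n⁻¹| for 1 ≤ n ≤ p−1 is ⌊p/4⌋+1. -/
theorem card_inverse_diff_values (p : ℕ) (hp : p.Prime) :
    ((Finset.Icc 1 (p - 1)).image
        (fun n : ℕ => ((n : ℤ) - ((((n : ZMod p)⁻¹).val : ℕ) : ℤ)).natAbs)).card = p / 4 + 1 := by
  obtain rfl | hp2 := eq_or_ne p 2
  · decide
  have : Fact p.Prime := ⟨hp⟩
  have hchar : ringChar (ZMod p) ≠ 2 := by rwa [ZMod.ringChar_zmod_n]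
  have hcount := card_orbits_signInv_mul_four hchar
  rw [ZMod.card] at hcount
  rw [ZMod.image_Icc_natAbs_sub_inv_val,
    MulAction.card_image_eq_card_orbits _ fun _ _ => ZMod.natAbs_valSubInvVal_eq_iff]
  have hodd := Nat.odd_iff.mp (hp.odd_of_ne_two hp2)
  rcases (by omega : p % 4 = 1 ∨ p % 4 = 3) with h | h
  · rw [ZMod.χ₄_nat_one_mod_four h] at hcount
    omega
  · rw [ZMod.χ₄_nat_three_mod_four h] at hcount
    omega
end

section
/- Let d ≥ 3 and for 0 ≤ h ≤ d define b_h ∈ ℤ^{d+1} by: all coordinates of b_h equal h, except coordinate h−1 (mod d+1) which equals h−1 and coordinate h+1 (mod d+1) which equals h+1. Then for all 1 ≤ j, k ≤ d, the normalized distance d^{−3/2}·dist(b_j, b_k) = |k−j|/d + O(1/d), with absolute implied constant; in particular the closure of the set of normalized distances between points of B = {b₀,…,b_d} over all d is the interval [0,1]. -/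
/-!
Write `b_h = h • 𝟙 + δ_h`, where `δ_h` has at most two nonzero entries, each `±1`,
so `‖δ_h‖ ≤ √2`. By the triangle inequality `dist b_j b_k` is within `2√2` of
`‖(j - k) • 𝟙‖ = |j - k| √(d + 1)`, and after dividing by `d^{3/2}` this is within `1 / d` of
`|j - k| / d` because `√(d + 1) - √d ≤ 1 / √d`. For density, approximate `y ∈ [0, 1]` by
`⌊y d⌋ / d`, realised by `j = 0`, `k = ⌊y d⌋`.
-/

/-- The vertices of the diagonal polytope: `diagB d h` has all coordinates equal to `h`,
except coordinate `h−1 (mod d+1)` which is `h−1` and coordinate `h+1 (mod d+1)` which is `h+1`. -/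
noncomputable def diagB (d h : ℕ) (i : Fin (d + 1)) : ℤ :=
  if i.val = (h + d) % (d + 1) then (h : ℤ) - 1
  else if i.val = (h + 1) % (d + 1) then (h : ℤ) + 1
  else (h : ℤ)

open Finset

lemma sqrt_sum_sq_sub_eq_dist {ι : Type*} [Fintype ι] (x y : ι → ℝ) :
    √(∑ i, (x i - y i) ^ 2) =
      dist (WithLp.toLp 2 x : EuclideanSpace ℝ ι) (WithLp.toLp 2 y) := by
  simp [EuclideanSpace.dist_eq, Real.dist_eq, sq_abs]

lemma dist_toLp_const {ι : Type*} [Fintype ι] (a b : ℝ) :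
    dist (WithLp.toLp 2 (fun _ : ι => a) : EuclideanSpace ℝ ι) (WithLp.toLp 2 fun _ => b) =
      |a - b| * √(Fintype.card ι) := by
  rw [← sqrt_sum_sq_sub_eq_dist]
  simp [Real.sqrt_sq_eq_abs, mul_comm]

lemma sum_ite_val_eq_le_one (n a : ℕ) : ∑ i : Fin n, (if i.val = a then 1 else 0 : ℝ) ≤ 1 := by
  rw [sum_boole]
  exact_mod_cast card_le_one.2 fun i hi i' hi' => Fin.ext <| by
    simp only [mem_filter] at hi hi'
    omega

lemma sum_sq_diagB_sub_le (d h : ℕ) : ∑ i, ((diagB d h i : ℝ) - h) ^ 2 ≤ 2 := by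
  calc ∑ i, ((diagB d h i : ℝ) - h) ^ 2
      ≤ ∑ i : Fin (d + 1), ((if i.val = (h + d) % (d + 1) then 1 else 0 : ℝ) +
          if i.val = (h + 1) % (d + 1) then 1 else 0) := by
        gcongr with i
        unfold diagB
        split_ifs <;> norm_num
    _ ≤ 2 := by
        rw [sum_add_distrib]
        linarith [sum_ite_val_eq_le_one (d + 1) ((h + d) % (d + 1)),
          sum_ite_val_eq_le_one (d + 1) ((h + 1) % (d + 1))]

lemma dist_diagB_const_le (d h : ℕ) :
    dist (WithLp.toLp 2 (fun i => (diagB d h i : ℝ)) : EuclideanSpace ℝ (Fin (d + 1)))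
      (WithLp.toLp 2 fun _ => (h : ℝ)) ≤ √2 := by
  rw [← sqrt_sum_sq_sub_eq_dist]
  exact Real.sqrt_le_sqrt (sum_sq_diagB_sub_le d h)

lemma abs_sqrt_sum_sq_diagB_sub_le (d j k : ℕ) :
    |√(∑ i : Fin (d + 1), ((diagB d j i : ℝ) - (diagB d k i : ℝ)) ^ 2) -
      |(k : ℝ) - j| * √(d + 1)| ≤ 2 * √2 := by
  have := dist_dist_dist_le
    (WithLp.toLp 2 (fun i => (diagB d j i : ℝ)) : EuclideanSpace ℝ (Fin (d + 1)))
    (WithLp.toLp 2 fun i => (diagB d k i : ℝ)) (WithLp.toLp 2 fun _ => (j : ℝ))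
    (WithLp.toLp 2 fun _ => (k : ℝ))
  rw [Real.dist_eq, dist_toLp_const, ← sqrt_sum_sq_sub_eq_dist] at this
  simp only [Fintype.card_fin, Nat.cast_add, Nat.cast_one, abs_sub_comm (j : ℝ)] at this
  linarith [dist_diagB_const_le d j, dist_diagB_const_le d k]

lemma rpow_three_halves_eq_mul_sqrt {D : ℝ} (hD : 0 ≤ D) : D ^ ((3 : ℝ) / 2) = D * √D := by
  rw [show (3 : ℝ) / 2 = 1 + 1 / 2 by norm_num, Real.rpow_add' hD (by norm_num), Real.rpow_one,
    Real.sqrt_eq_rpow]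

lemma abs_mul_sqrt_succ_div_rpow_sub_le {D m : ℝ} (hD : 0 < D) (hm : 0 ≤ m) (hmD : m ≤ D) :
    |m * √(D + 1) / D ^ ((3 : ℝ) / 2) - m / D| ≤ 1 / D := by
  set s := √D
  set t := √(D + 1)
  have hs : 0 < s := Real.sqrt_pos.2 hD
  have hs2 : s ^ 2 = D := Real.sq_sqrt hD.le
  have ht2 : t ^ 2 = D + 1 := Real.sq_sqrt (by linarith)
  have hst : s ≤ t := Real.sqrt_le_sqrt (by linarith)
  -- `(t - s) * (t + s) = 1`, so the gap `t - s` is at most `1 / s`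
  have hgap : s * (t - s) ≤ 1 := by nlinarith
  have heq : m * t / D ^ ((3 : ℝ) / 2) - m / D = m * (t - s) / (D * s) := by
    rw [rpow_three_halves_eq_mul_sqrt hD.le]
    field_simp
    ring
  have hnum : m * (t - s) ≤ s :=
    calc m * (t - s) ≤ D * (t - s) := mul_le_mul_of_nonneg_right hmD (sub_nonneg.2 hst)
      _ = s * (s * (t - s)) := by rw [← hs2]; ring
      _ ≤ s := mul_le_of_le_one_right hs.le hgap
  rw [heq, abs_of_nonneg (by positivity), div_le_div_iff₀ (by positivity) hD]
  nlinarith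

lemma abs_normalized_dist_diagB_sub_le {d j k : ℕ} (hd : 1 ≤ d) (hj : j ≤ d) (hk : k ≤ d) :
    |√(∑ i : Fin (d + 1), ((diagB d j i : ℝ) - (diagB d k i : ℝ)) ^ 2) / (d : ℝ) ^ ((3 : ℝ) / 2)
      - |(k : ℝ) - j| / d| ≤ 4 / d := by
  set A := √(∑ i : Fin (d + 1), ((diagB d j i : ℝ) - (diagB d k i : ℝ)) ^ 2)
  set m := |(k : ℝ) - j|
  have hD : (1 : ℝ) ≤ d := by exact_mod_cast hd
  have hP : (d : ℝ) ≤ (d : ℝ) ^ ((3 : ℝ) / 2) := by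
    simpa using Real.rpow_le_rpow_of_exponent_le hD (by norm_num : (1 : ℝ) ≤ 3 / 2)
  have hP0 : 0 < (d : ℝ) ^ ((3 : ℝ) / 2) := by linarith
  have hm : m ≤ d := abs_sub_le_iff.2 ⟨by linarith [(Nat.cast_le (α := ℝ)).2 hk],
    by linarith [(Nat.cast_le (α := ℝ)).2 hj]⟩
  have hA : |A - m * √(d + 1)| ≤ 3 := by
    have : 2 * √2 ≤ 3 := by nlinarith [Real.sq_sqrt (show (0 : ℝ) ≤ 2 by norm_num)]
    exact (abs_sqrt_sum_sq_diagB_sub_le d j k).trans this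
  calc |A / (d : ℝ) ^ ((3 : ℝ) / 2) - m / d|
      ≤ |A / (d : ℝ) ^ ((3 : ℝ) / 2) - m * √(d + 1) / (d : ℝ) ^ ((3 : ℝ) / 2)|
        + |m * √(d + 1) / (d : ℝ) ^ ((3 : ℝ) / 2) - m / d| := abs_sub_le _ _ _
    _ = |A - m * √(d + 1)| / (d : ℝ) ^ ((3 : ℝ) / 2)
        + |m * √(d + 1) / (d : ℝ) ^ ((3 : ℝ) / 2) - m / d| := by
      rw [← sub_div, abs_div, abs_of_pos hP0]
    _ ≤ 3 / d + 1 / d := add_le_add (div_le_div₀ (by norm_num) hA (by positivity) hP)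
        (abs_mul_sqrt_succ_div_rpow_sub_le (by positivity) (abs_nonneg _) hm)
    _ = 4 / d := by ring

lemma abs_floor_mul_div_sub_le {x D : ℝ} (hx : 0 ≤ x) (hD : 0 < D) :
    |(⌊x * D⌋₊ : ℝ) / D - x| ≤ 1 / D := by
  have hlo := Nat.floor_le (mul_nonneg hx hD.le)
  have hhi := Nat.lt_floor_add_one (x * D)
  rw [show (⌊x * D⌋₊ : ℝ) / D - x = (⌊x * D⌋₊ - x * D) / D by field_simp, abs_div,
    abs_of_pos hD]
  gcongr
  exact abs_le.2 ⟨by linarith, by linarith⟩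

/-- the normalized distances d^{−3/2}·dist(b_j, b_k) equal |k−j|/d + O(1/d),
and consequently the closure of the set of normalized distances over all d is [0,1]. -/
theorem diagB_dist :
    (∃ C : ℝ, 0 < C ∧ ∀ d j k : ℕ, 3 ≤ d → 1 ≤ j → j ≤ d → 1 ≤ k → k ≤ d →
      |Real.sqrt (∑ i : Fin (d + 1), ((diagB d j i : ℝ) - (diagB d k i : ℝ)) ^ 2)
          / (d : ℝ) ^ ((3 : ℝ) / 2)
        - |(k : ℝ) - (j : ℝ)| / d| ≤ C / d) ∧
    (∀ y : ℝ, 0 ≤ y → y ≤ 1 → ∀ ε : ℝ, 0 < ε → ∃ d j k : ℕ, 3 ≤ d ∧ j ≤ d ∧ k ≤ d ∧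
      |Real.sqrt (∑ i : Fin (d + 1), ((diagB d j i : ℝ) - (diagB d k i : ℝ)) ^ 2)
          / (d : ℝ) ^ ((3 : ℝ) / 2) - y| < ε) := by
  refine ⟨⟨4, by norm_num, fun d j k hd _ hj _ hk =>
    abs_normalized_dist_diagB_sub_le (by omega) hj hk⟩, fun y hy0 hy1 ε hε => ?_⟩
  obtain ⟨n, hn⟩ := exists_nat_gt (5 / ε)
  set d := max 3 n
  have hd : (0 : ℝ) < d := by positivity
  have hdε : 5 / d < ε := by
    rw [div_lt_comm₀ (by positivity) hε]
    exact hn.trans_le (by exact_mod_cast le_max_right 3 n)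
  have hk : ⌊y * d⌋₊ ≤ d := Nat.floor_le_of_le (by nlinarith)
  refine ⟨d, 0, ⌊y * d⌋₊, le_max_left 3 n, Nat.zero_le d, hk, ?_⟩
  have hdist := abs_normalized_dist_diagB_sub_le (by omega) (Nat.zero_le d) hk
  rw [Nat.cast_zero, sub_zero, Nat.abs_cast] at hdist
  calc _ ≤ _ := abs_sub_le _ ((⌊y * d⌋₊ : ℝ) / d) y
    _ ≤ 4 / d + 1 / d := add_le_add hdist (abs_floor_mul_div_sub_le hy0 hd)
    _ = 5 / d := by ring
    _ < ε := hdε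
end

section
/- Let d ≥ 2 and N ≥ 3d, let Ω be the set of pairs of mutually visible points of W = ({0,…,N})^d, and let dist_d(v,w) = dist(v,w)/(N√d) be the normalized Euclidean distance. Then there is an absolute constant C₃ > 0 such that (1/#Ω)·Σ_{(v,w)∈Ω} (dist_d²(v,w) − 1/6)² ≤ C₃·(1/d + d/N). Consequently, for any T > 0, the proportion of pairs (v,w) ∈ Ω with |dist_d(v,w) − 1/√6| ≥ 1/T is at most 6·C₃·T²·(1/d + d/N). -/
/-!
Over all pairs `(v, w) ∈ W²` the coordinate pairs `(vᵢ, wᵢ)` are independent and uniform on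
`{0, …, N}²`, so `‖v - w‖²` is a sum of `d` i.i.d. terms of mean `N(N+2)/6` and variance at most
`N⁴`. Hence the mean of `(dist_d² - 1/6)²` over all pairs is the variance term `≤ 1/d` plus the
squared bias `(1/(3N))²`. A pair is invisible only if some `p ∈ {2, 3, 5, 7, 9, …}`, `p ≤ N`,
divides every coordinate difference, which happens with probability at most
`(1/p + 1/(N+1))^d ≤ (1/p + 1/(N+1))²`; summing over `p` shows that at least `1/28` of all pairs
are visible, so restricting to `Ω` costs a factor `28`. The tail bound is Chebyshev's inequality
together with `|a² - 1/6| ≥ |a - 1/√6| / √6` for `a ≥ 0`.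
-/

open Finset

section SumsOverFunctions
variable {ι α : Type*} [Fintype ι] [DecidableEq ι] [Fintype α]

theorem sum_comp_eval (g : α → ℝ) (i : ι) :
    ∑ z : ι → α, g (z i) = (∑ a, g a) * Fintype.card α ^ (Fintype.card ι - 1) := by
  rw [← (Equiv.piSplitAt i fun _ => α).symm.sum_comp, Fintype.sum_prod_type]
  simp [Equiv.piSplitAt, sum_mul, Fintype.card_subtype_compl, mul_comm]

theorem sum_comp_eval_mul_comp_eval {i j : ι} (hij : i ≠ j) (g h : α → ℝ) :
    ∑ z : ι → α, g (z i) * h (z j)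
      = (∑ a, g a) * (∑ a, h a) * Fintype.card α ^ (Fintype.card ι - 2) := by
  rw [← (Equiv.piSplitAt i fun _ => α).symm.sum_comp, Fintype.sum_prod_type]
  simp only [Equiv.piSplitAt, Equiv.coe_fn_symm_mk, dif_pos, dif_neg hij.symm, ← mul_sum]
  rw [sum_comp_eval h (⟨j, hij.symm⟩ : {k // k ≠ i}), Fintype.card_subtype_compl,
    ← sum_mul]
  simp [Nat.sub_sub, mul_assoc]

theorem sum_sq_sum_comp_of_sum_eq_zero {F : α → ℝ} (hF : ∑ a, F a = 0) :
    ∑ z : ι → α, (∑ i, F (z i)) ^ 2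
      = Fintype.card ι * (∑ a, F a ^ 2) * Fintype.card α ^ (Fintype.card ι - 1) := by
  have hdiag (i : ι) : ∑ j, ∑ z : ι → α, F (z i) * F (z j) = ∑ z : ι → α, F (z i) ^ 2 := by
    rw [sum_eq_single i (fun j _ hji => by
      rw [sum_comp_eval_mul_comp_eval (Ne.symm hji), hF, zero_mul, zero_mul]) (by simp)]
    simp only [sq]
  simp_rw [sq, sum_mul_sum, sum_comm (γ := ι → α)]
  simp [← sq, hdiag, sum_comp_eval (fun a => F a ^ 2), mul_assoc]

theorem sum_sq_sum_comp_sub {f : α → ℝ} {μ : ℝ} (hμ : ∑ a, f a = Fintype.card α * μ) (c : ℝ) :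
    ∑ z : ι → α, (∑ i, f (z i) - c) ^ 2
      = Fintype.card ι * (∑ a, (f a - μ) ^ 2) * Fintype.card α ^ (Fintype.card ι - 1)
        + Fintype.card α ^ Fintype.card ι * (Fintype.card ι * μ - c) ^ 2 := by
  have hF : ∑ a, (f a - μ) = 0 := by simp [hμ]
  have hmean : ∑ z : ι → α, ∑ i, (f (z i) - μ) = 0 := by
    rw [sum_comm]
    simp [sum_comp_eval (fun a => f a - μ), hF]
  have hsplit (z : ι → α) : ∑ i, f (z i) - c
      = ∑ i, (f (z i) - μ) + (Fintype.card ι * μ - c) := by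
    simp [sum_sub_distrib]
  simp_rw [hsplit, add_sq, sum_add_distrib, ← sum_mul, ← mul_sum, hmean,
    sum_sq_sum_comp_of_sum_eq_zero hF]
  simp
end SumsOverFunctions

theorem card_filter_forall_apply_pair {ι α β : Type*} [Fintype ι] [DecidableEq ι] [Fintype α]
    [Fintype β] (P : α × β → Prop) [DecidablePred P] :
    #(univ.filter fun q : (ι → α) × (ι → β) => ∀ i, P (q.1 i, q.2 i))
      = #(univ.filter P) ^ Fintype.card ι := by
  rw [card_equiv (Equiv.arrowProdEquivProdArrow ι (fun _ => α) (fun _ => β)).symm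
    (t := Fintype.piFinset fun _ => univ.filter P) (by simp [Equiv.arrowProdEquivProdArrow]),
    Fintype.card_piFinset, prod_const, card_univ]

theorem sum_sum_fin_sub_sq (n : ℕ) :
    ∑ x : Fin n, ∑ y : Fin n, (((x : ℕ) : ℝ) - (y : ℕ)) ^ 2 = n ^ 2 * (n ^ 2 - 1) / 6 := by
  have hsum (m : ℕ) : ∑ i ∈ range m, (i : ℝ) = m * (m - 1) / 2 := by
    induction m with
    | zero => simp
    | succ m ih => rw [sum_range_succ, ih]; push_cast; ring
  have hsum_sq (m : ℕ) : ∑ i ∈ range m, (i : ℝ) ^ 2 = m * (m - 1) * (2 * m - 1) / 6 := by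
    induction m with
    | zero => simp
    | succ m ih => rw [sum_range_succ, ih]; push_cast; ring
  simp only [sub_sq, sum_add_distrib, sum_sub_distrib, ← mul_sum, ← sum_mul, sum_const, card_univ,
    Fintype.card_fin, nsmul_eq_mul, Fin.sum_univ_eq_sum_range (fun i => (i : ℝ)),
    Fin.sum_univ_eq_sum_range (fun i => (i : ℝ) ^ 2), hsum, hsum_sq]
  ring

theorem sum_sq_sub_sq_sub_le (N : ℕ) {μ : ℝ} (hμ₀ : 0 ≤ μ) (hμ : μ ≤ N ^ 2) :
    ∑ z : Fin (N + 1) × Fin (N + 1), ((((z.1 : ℕ) : ℝ) - (z.2 : ℕ)) ^ 2 - μ) ^ 2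
      ≤ (N + 1) ^ 2 * N ^ 4 := by
  have hterm (x y : Fin (N + 1)) : ((((x : ℕ) : ℝ) - (y : ℕ)) ^ 2 - μ) ^ 2 ≤ N ^ 4 := by
    have hx : ((x : ℕ) : ℝ) ≤ N := by exact_mod_cast Fin.is_le x
    have hy : ((y : ℕ) : ℝ) ≤ N := by exact_mod_cast Fin.is_le y
    have hdiff : (((x : ℕ) : ℝ) - (y : ℕ)) ^ 2 ≤ N ^ 2 :=
      sq_le_sq.mpr ((abs_sub_le_of_nonneg_of_le (by positivity) hx (by positivity) hy).trans
        (le_abs_self _))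
    calc _ ≤ ((N : ℝ) ^ 2) ^ 2 :=
          sq_le_sq.mpr ((abs_sub_le_of_nonneg_of_le (sq_nonneg _) hdiff hμ₀ hμ).trans
            (le_abs_self _))
      _ = N ^ 4 := by ring
  calc _ ≤ ∑ _z : Fin (N + 1) × Fin (N + 1), (N : ℝ) ^ 4 :=
        sum_le_sum fun z _ => hterm z.1 z.2
    _ = _ := by
        rw [sum_const, card_univ, Fintype.card_prod, Fintype.card_fin, nsmul_eq_mul]
        push_cast; ring

theorem sum_sq_sqDist_div_sub_one_sixth_le {d N : ℕ} (hd : d ≠ 0) (hN : N ≠ 0) :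
    ∑ q : (Fin d → Fin (N + 1)) × (Fin d → Fin (N + 1)),
      ((∑ i, (((q.1 i : ℕ) : ℝ) - ((q.2 i : ℕ) : ℝ)) ^ 2) / ((N : ℝ) ^ 2 * d) - 1 / 6) ^ 2
    ≤ (((N : ℝ) + 1) ^ 2) ^ d * (1 / d + 1 / (9 * N ^ 2)) := by
  set μ : ℝ := N * (N + 2) / 6
  have hμ : ∑ z : Fin (N + 1) × Fin (N + 1), (((z.1 : ℕ) : ℝ) - (z.2 : ℕ)) ^ 2
      = Fintype.card (Fin (N + 1) × Fin (N + 1)) * μ := by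
    rw [Fintype.sum_prod_type, sum_sum_fin_sub_sq]
    simp [μ]; ring
  have hV := sum_sq_sub_sq_sub_le N (μ := μ) (by positivity) (by
    have : (1 : ℝ) ≤ N := by exact_mod_cast Nat.one_le_iff_ne_zero.mpr hN
    simp only [μ]; nlinarith)
  have hnorm (X : ℝ) : (X / ((N : ℝ) ^ 2 * d) - 1 / 6) ^ 2
      = (X - N ^ 2 * d / 6) ^ 2 / ((N : ℝ) ^ 2 * d) ^ 2 := by
    field_simp
  rw [← (Equiv.arrowProdEquivProdArrow (Fin d) (fun _ => Fin (N + 1))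
    (fun _ => Fin (N + 1))).sum_comp]
  simp only [Equiv.arrowProdEquivProdArrow, Equiv.coe_fn_mk, hnorm, ← sum_div]
  rw [sum_sq_sum_comp_sub hμ]
  have hbias : (d : ℝ) * μ - N ^ 2 * d / 6 = d * N / 3 := by ring
  have hN₀ : (0 : ℝ) < N := by positivity
  have hd₀ : (0 : ℝ) < d := by positivity
  simp only [Fintype.card_prod, Fintype.card_fin, hbias]
  rw [div_le_iff₀ (by positivity)]
  push_cast
  calc _ ≤ d * ((N + 1) ^ 2 * N ^ 4) * (((N : ℝ) + 1) * (N + 1)) ^ (d - 1)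
        + (((N : ℝ) + 1) * (N + 1)) ^ d * (d * N / 3) ^ 2 := by gcongr
    _ = _ := by
      rw [← pow_sub_one_mul hd (((N : ℝ) + 1) ^ 2), ← pow_sub_one_mul hd (((N : ℝ) + 1) * (N + 1))]
      field_simp
      ring

theorem exists_prime_le_forall_dvd_of_gcd_ne_one {ι : Type*} {s : Finset ι} {f : ι → ℕ} {N : ℕ}
    (hN : 2 ≤ N) (hf : ∀ i ∈ s, f i ≤ N) (hgcd : s.gcd f ≠ 1) :
    ∃ p, p.Prime ∧ p ≤ N ∧ ∀ i ∈ s, p ∣ f i := by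
  refine ⟨(s.gcd f).minFac, Nat.minFac_prime hgcd, ?_, fun i hi =>
    (Nat.minFac_dvd _).trans (gcd_dvd hi)⟩
  by_cases hzero : s.gcd f = 0
  · rwa [hzero, Nat.minFac_zero]
  · obtain ⟨i, hi, hfi⟩ : ∃ i ∈ s, f i ≠ 0 := by
      by_contra! h
      exact hzero (gcd_eq_zero_iff.mpr h)
    calc (s.gcd f).minFac ≤ s.gcd f := Nat.minFac_le (Nat.pos_of_ne_zero hzero)
      _ ≤ f i := Nat.le_of_dvd (Nat.pos_of_ne_zero hfi) (gcd_dvd hi)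
      _ ≤ N := hf i hi

/-- Odd numbers stand in for the odd primes so that `∑ 1 / p ^ 2` telescopes. -/
def primeCandidates (N : ℕ) : Finset ℕ :=
  insert 2 ((range ((N - 1) / 2)).image fun m => 2 * m + 3)

theorem Nat.Prime.mem_primeCandidates {p N : ℕ} (hp : p.Prime) (hpN : p ≤ N) :
    p ∈ primeCandidates N := by
  rcases hp.eq_two_or_odd with rfl | hodd
  · exact mem_insert_self _ _
  · have := hp.two_le
    exact mem_insert_of_mem (mem_image.mpr ⟨(p - 3) / 2, mem_range.mpr (by omega), by omega⟩)

theorem two_le_of_mem_primeCandidates {p N : ℕ} (hp : p ∈ primeCandidates N) : 2 ≤ p := by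
  simp only [primeCandidates, mem_insert, mem_image] at hp
  omega

theorem card_primeCandidates_le {N : ℕ} (hN : 1 ≤ N) : 2 * #(primeCandidates N) ≤ N + 1 := by
  have := (card_insert_le 2 ((range ((N - 1) / 2)).image fun m => 2 * m + 3)).trans
    (Nat.add_le_add_right card_image_le 1)
  rw [card_range] at this
  unfold primeCandidates
  omega

theorem sum_primeCandidates_inv_sq_le (N : ℕ) :
    ∑ p ∈ primeCandidates N, 1 / (p : ℝ) ^ 2 ≤ 1 / 2 := by
  rw [primeCandidates, sum_insert (by simp), sum_image (by intro a _ b _ h; simp at h; omega)]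
  have hterm (m : ℕ) : 1 / (((2 * m + 3 : ℕ) : ℝ)) ^ 2
      ≤ 1 / (4 * ((m : ℝ) + 1)) - 1 / (4 * (((m + 1 : ℕ) : ℝ) + 1)) := by
    push_cast
    rw [div_sub_div _ _ (by positivity) (by positivity), div_le_div_iff₀ (by positivity)
      (by positivity)]
    nlinarith
  set f : ℕ → ℝ := fun m => 1 / (4 * ((m : ℝ) + 1))
  calc _ ≤ 1 / ((2 : ℕ) : ℝ) ^ 2 + ∑ m ∈ range ((N - 1) / 2), (f m - f (m + 1)) := by
        gcongr with m; exact hterm m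
    _ = 1 / 4 + (1 / 4 - f ((N - 1) / 2)) := by rw [sum_range_sub']; norm_num [f]
    _ ≤ 1 / 2 := by linarith [show 0 ≤ f ((N - 1) / 2) by positivity]

theorem card_dvd_natAbs_sub_le (N p : ℕ) :
    #(univ.filter fun z : Fin (N + 1) × Fin (N + 1) =>
      p ∣ (((z.1 : ℕ) : ℤ) - ((z.2 : ℕ) : ℤ)).natAbs) ≤ (N + 1) * (N / p + 1) := by
  calc _ ≤ #((univ : Finset (Fin (N + 1))) ×ˢ range (N / p + 1)) := by
        refine card_le_card_of_injOn (fun z => (z.1, (z.2 : ℕ) / p)) (fun z _ => ?_) ?_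
        · simpa using Nat.lt_succ_of_le (Nat.div_le_div_right (Fin.is_le z.2))
        · intro z hz w hw hzw
          simp only [mem_coe, mem_filter, mem_univ, true_and, ← Int.natCast_dvd,
            ← Nat.modEq_iff_dvd] at hz hw
          simp only [Prod.mk.injEq] at hzw
          refine Prod.ext hzw.1 (Fin.ext ?_)
          have hmod : (z.2 : ℕ) % p = (w.2 : ℕ) % p := by
            rw [hzw.1] at hz; exact hz.trans hw.symm
          rw [← Nat.div_add_mod (z.2 : ℕ) p, ← Nat.div_add_mod (w.2 : ℕ) p, hzw.2, hmod]
    _ = _ := by simp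

theorem sum_primeCandidates_sq_le {N : ℕ} (hN : 6 ≤ N) :
    ∑ p ∈ primeCandidates N, (1 / (p : ℝ) + 1 / (N + 1)) ^ 2 ≤ 27 / 28 := by
  have hcard : 2 * (#(primeCandidates N) : ℝ) ≤ N + 1 := by
    exact_mod_cast card_primeCandidates_le (by omega)
  have hN' : (6 : ℝ) ≤ N := by exact_mod_cast hN
  have htail : (N + 1) / 2 * (3 * (1 / ((N : ℝ) + 1)) ^ 2) ≤ 3 / 14 := by
    rw [show (N + 1) / 2 * (3 * (1 / ((N : ℝ) + 1)) ^ 2) = 3 / (2 * (N + 1)) by field_simp,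
      div_le_div_iff₀ (by positivity) (by norm_num)]
    linarith
  calc _ ≤ ∑ p ∈ primeCandidates N, (3 / 2 * (1 / (p : ℝ) ^ 2) + 3 * (1 / ((N : ℝ) + 1)) ^ 2) := by
        gcongr with p
        rw [← one_div_pow]
        nlinarith [sq_nonneg (1 / (p : ℝ) - 2 * (1 / (N + 1)))]
    _ = 3 / 2 * ∑ p ∈ primeCandidates N, 1 / (p : ℝ) ^ 2
          + #(primeCandidates N) * (3 * (1 / ((N : ℝ) + 1)) ^ 2) := by
        rw [sum_add_distrib, ← mul_sum, sum_const, nsmul_eq_mul]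
    _ ≤ 3 / 2 * (1 / 2) + (N + 1) / 2 * (3 * (1 / ((N : ℝ) + 1)) ^ 2) := by
        gcongr
        · exact sum_primeCandidates_inv_sq_le N
        · linarith
    _ ≤ 27 / 28 := by linarith

theorem pow_card_dvd_natAbs_sub_le {N p d : ℕ} (hN : 1 ≤ N) (hp : 2 ≤ p) (hd : 2 ≤ d) :
    (#(univ.filter fun z : Fin (N + 1) × Fin (N + 1) =>
      p ∣ (((z.1 : ℕ) : ℤ) - ((z.2 : ℕ) : ℤ)).natAbs) : ℝ) ^ d
      ≤ (((N : ℝ) + 1) ^ 2) ^ d * (1 / (p : ℝ) + 1 / (N + 1)) ^ 2 := by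
  have hp' : (2 : ℝ) ≤ p := by exact_mod_cast hp
  have hρ : 1 / (p : ℝ) + 1 / (N + 1) ≤ 1 := by
    have hN' : (1 : ℝ) ≤ N := by exact_mod_cast hN
    have : 1 / ((N : ℝ) + 1) ≤ 1 / 2 := by gcongr; linarith
    have : 1 / (p : ℝ) ≤ 1 / 2 := by gcongr
    linarith
  have hcard : (#(univ.filter fun z : Fin (N + 1) × Fin (N + 1) =>
      p ∣ (((z.1 : ℕ) : ℤ) - ((z.2 : ℕ) : ℤ)).natAbs) : ℝ)
      ≤ ((N : ℝ) + 1) ^ 2 * (1 / (p : ℝ) + 1 / (N + 1)) := by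
    calc _ ≤ (((N + 1) * (N / p + 1) : ℕ) : ℝ) := by exact_mod_cast card_dvd_natAbs_sub_le N p
      _ ≤ ((N : ℝ) + 1) * ((N + 1) / p + 1) := by
        push_cast
        gcongr
        exact Nat.cast_div_le.trans (by gcongr; linarith)
      _ = _ := by field_simp
  calc _ ≤ (((N : ℝ) + 1) ^ 2 * (1 / (p : ℝ) + 1 / (N + 1))) ^ d := by gcongr
    _ ≤ _ := by
      rw [mul_pow]
      exact mul_le_mul_of_nonneg_left (pow_le_pow_of_le_one (by positivity) hρ hd) (by positivity)

def visiblePairs (d N : ℕ) : Finset ((Fin d → Fin (N + 1)) × (Fin d → Fin (N + 1))) :=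
  univ.filter fun q => univ.gcd (fun i => (((q.1 i : ℕ) : ℤ) - ((q.2 i : ℕ) : ℤ)).natAbs) = 1

theorem card_compl_visiblePairs_le {d N : ℕ} (hN : 2 ≤ N) :
    #(visiblePairs d N)ᶜ ≤ ∑ p ∈ primeCandidates N,
      #(univ.filter fun z : Fin (N + 1) × Fin (N + 1) =>
        p ∣ (((z.1 : ℕ) : ℤ) - ((z.2 : ℕ) : ℤ)).natAbs) ^ d := by
  calc _ ≤ #((primeCandidates N).biUnion fun p => univ.filter fun q :
          (Fin d → Fin (N + 1)) × (Fin d → Fin (N + 1)) =>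
            ∀ i, p ∣ (((q.1 i : ℕ) : ℤ) - ((q.2 i : ℕ) : ℤ)).natAbs) := by
        refine card_le_card fun q hq => ?_
        rw [mem_compl, visiblePairs, mem_filter] at hq
        obtain ⟨p, hp, hpN, hdvd⟩ := exists_prime_le_forall_dvd_of_gcd_ne_one hN
          (fun i _ => by have := (q.1 i).is_le; have := (q.2 i).is_le; omega)
          fun h => hq ⟨mem_univ q, h⟩
        exact mem_biUnion.mpr ⟨p, hp.mem_primeCandidates hpN,
          mem_filter.mpr ⟨mem_univ q, fun i => hdvd i (mem_univ i)⟩⟩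
    _ ≤ _ := card_biUnion_le
    _ = _ := by
        refine sum_congr rfl fun p _ => ?_
        simpa using card_filter_forall_apply_pair (ι := Fin d) fun z : Fin (N + 1) × Fin (N + 1) =>
          p ∣ (((z.1 : ℕ) : ℤ) - ((z.2 : ℕ) : ℤ)).natAbs

theorem card_visiblePairs_ge {d N : ℕ} (hd : 2 ≤ d) (hN : 6 ≤ N) :
    (((N : ℝ) + 1) ^ 2) ^ d / 28 ≤ #(visiblePairs d N) := by
  have htotal : (#(visiblePairs d N) : ℝ) + #(visiblePairs d N)ᶜ = (((N : ℝ) + 1) ^ 2) ^ d := by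
    rw [← Nat.cast_add, card_add_card_compl]
    simp only [Fintype.card_prod, Fintype.card_fun, Fintype.card_fin]
    push_cast
    rw [← mul_pow, sq]
  have hcompl : (#(visiblePairs d N)ᶜ : ℝ) ≤ (((N : ℝ) + 1) ^ 2) ^ d * (27 / 28) := by
    calc _ ≤ ∑ p ∈ primeCandidates N, (#(univ.filter fun z : Fin (N + 1) × Fin (N + 1) =>
            p ∣ (((z.1 : ℕ) : ℤ) - ((z.2 : ℕ) : ℤ)).natAbs) : ℝ) ^ d := by
          exact_mod_cast card_compl_visiblePairs_le (by omega)
      _ ≤ ∑ p ∈ primeCandidates N, (((N : ℝ) + 1) ^ 2) ^ d * (1 / (p : ℝ) + 1 / (N + 1)) ^ 2 :=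
          sum_le_sum fun p hp =>
            pow_card_dvd_natAbs_sub_le (by omega) (two_le_of_mem_primeCandidates hp) hd
      _ ≤ _ := by
          rw [← mul_sum]
          gcongr
          exact sum_primeCandidates_sq_le hN
  linarith

theorem mul_abs_sub_le_abs_sq_sub_sq {a r : ℝ} (ha : 0 ≤ a) (hr : 0 ≤ r) :
    r * |a - r| ≤ |a ^ 2 - r ^ 2| := by
  rw [sq_sub_sq, abs_mul, abs_of_nonneg (add_nonneg ha hr)]
  exact mul_le_mul_of_nonneg_right (by linarith) (abs_nonneg _)

theorem one_div_six_mul_sq_le_sq_sub {a T : ℝ} (ha : 0 ≤ a) (hT : 0 < T)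
    (h : 1 / T ≤ |a - 1 / √6|) : 1 / (6 * T ^ 2) ≤ (a ^ 2 - 1 / 6) ^ 2 := by
  have hr : (1 / √6) ^ 2 = 1 / 6 := by rw [div_pow, one_pow, Real.sq_sqrt (by norm_num)]
  have key := mul_abs_sub_le_abs_sq_sub_sq ha (r := 1 / √6) (by positivity)
  rw [hr] at key
  calc 1 / (6 * T ^ 2) = (1 / √6 * (1 / T)) ^ 2 := by rw [mul_pow, hr]; ring
    _ ≤ (a ^ 2 - 1 / 6) ^ 2 := by
      rw [← sq_abs (a ^ 2 - 1 / 6)]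
      gcongr
      exact (mul_le_mul_of_nonneg_left h (by positivity)).trans key

theorem mul_card_filter_le_sum {α : Type*} {s : Finset α} {f : α → ℝ} {c : ℝ}
    (p : α → Prop) [DecidablePred p] (hf : ∀ x ∈ s, 0 ≤ f x) (hc : ∀ x ∈ s, p x → c ≤ f x) :
    c * #(s.filter p) ≤ ∑ x ∈ s, f x :=
  calc c * #(s.filter p) = #(s.filter p) • c := by rw [nsmul_eq_mul, mul_comm]
    _ ≤ ∑ x ∈ s.filter p, f x :=
      card_nsmul_le_sum _ _ _ fun x hx => hc x (mem_filter.1 hx).1 (mem_filter.1 hx).2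
    _ ≤ ∑ x ∈ s, f x := sum_le_sum_of_subset_of_nonneg (filter_subset _ _) fun x hx _ => hf x hx

/-- the second moment of dist_d² about 1/6 over visible pairs is
O(1/d + d/N), and the Chebyshev-type consequence for |dist_d − 1/√6| ≥ 1/T. -/
theorem second_moment_visible_pairs :
    ∃ C₃ : ℝ, 0 < C₃ ∧ ∀ d N : ℕ, 2 ≤ d → 3 * d ≤ N →
      (1 / ((Finset.univ.filter (fun q : (Fin d → Fin (N + 1)) × (Fin d → Fin (N + 1)) =>
            Finset.univ.gcd
              (fun i => (((q.1 i : ℕ) : ℤ) - ((q.2 i : ℕ) : ℤ)).natAbs) = 1)).card : ℝ)) *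
        (∑ q ∈ Finset.univ.filter (fun q : (Fin d → Fin (N + 1)) × (Fin d → Fin (N + 1)) =>
            Finset.univ.gcd
              (fun i => (((q.1 i : ℕ) : ℤ) - ((q.2 i : ℕ) : ℤ)).natAbs) = 1),
          ((∑ i : Fin d, (((q.1 i : ℕ) : ℝ) - ((q.2 i : ℕ) : ℝ)) ^ 2) / ((N : ℝ) ^ 2 * d)
            - 1 / 6) ^ 2)
      ≤ C₃ * (1 / (d : ℝ) + (d : ℝ) / N) ∧
      ∀ T : ℝ, 0 < T →
        (((Finset.univ.filter (fun q : (Fin d → Fin (N + 1)) × (Fin d → Fin (N + 1)) =>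
            (Finset.univ.gcd
              (fun i => (((q.1 i : ℕ) : ℤ) - ((q.2 i : ℕ) : ℤ)).natAbs) = 1) ∧
            1 / T ≤ |Real.sqrt (∑ i : Fin d, (((q.1 i : ℕ) : ℝ) - ((q.2 i : ℕ) : ℝ)) ^ 2)
                / ((N : ℝ) * Real.sqrt d) - 1 / Real.sqrt 6|)).card : ℝ)
          / ((Finset.univ.filter (fun q : (Fin d → Fin (N + 1)) × (Fin d → Fin (N + 1)) =>
            Finset.univ.gcd
              (fun i => (((q.1 i : ℕ) : ℤ) - ((q.2 i : ℕ) : ℤ)).natAbs) = 1)).card : ℝ))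
        ≤ 6 * C₃ * T ^ 2 * (1 / (d : ℝ) + (d : ℝ) / N) := by
  refine ⟨28, by norm_num, fun d N hd hN => ?_⟩
  simp only [← filter_filter, ← visiblePairs.eq_1]
  have hd' : (2 : ℝ) ≤ d := by exact_mod_cast hd
  have hN' : (d : ℝ) * 3 ≤ N := by exact_mod_cast (mul_comm d 3).le.trans hN
  have hΩ := card_visiblePairs_ge hd (by omega : 6 ≤ N)
  have hΩ₀ : (0 : ℝ) < #(visiblePairs d N) := lt_of_lt_of_le (by positivity) hΩ
  have hN₀ : (0 : ℝ) < N := by linarith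
  have hbias : 1 / (9 * (N : ℝ) ^ 2) ≤ d / N := by
    rw [div_le_div_iff₀ (by positivity) (by positivity)]
    nlinarith
  have hsum : ∑ q ∈ visiblePairs d N,
      ((∑ i, (((q.1 i : ℕ) : ℝ) - ((q.2 i : ℕ) : ℝ)) ^ 2) / ((N : ℝ) ^ 2 * d) - 1 / 6) ^ 2
      ≤ 28 * #(visiblePairs d N) * (1 / (d : ℝ) + d / N) :=
    calc _ ≤ _ := sum_le_sum_of_subset_of_nonneg (subset_univ _) fun _ _ _ => sq_nonneg _
      _ ≤ (((N : ℝ) + 1) ^ 2) ^ d * (1 / d + 1 / (9 * N ^ 2)) :=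
        sum_sq_sqDist_div_sub_one_sixth_le (by omega) (by omega)
      _ ≤ _ := mul_le_mul (by linarith) (by linarith) (by positivity) (by positivity)
  refine ⟨by rw [one_div_mul_eq_div, div_le_iff₀ hΩ₀]; linarith, fun T hT => ?_⟩
  rw [div_le_iff₀ hΩ₀]
  calc _ = 6 * T ^ 2 * (1 / (6 * T ^ 2) * #((visiblePairs d N).filter _)) := by
        rw [← mul_assoc, mul_one_div_cancel (by positivity), one_mul]
    _ ≤ 6 * T ^ 2 * (28 * #(visiblePairs d N) * (1 / (d : ℝ) + d / N)) := by
      refine mul_le_mul_of_nonneg_left (le_trans ?_ hsum) (by positivity)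
      refine mul_card_filter_le_sum _ (fun _ _ => sq_nonneg _) fun q _ hq => ?_
      have := one_div_six_mul_sq_le_sq_sub (by positivity) hT hq
      rwa [div_pow, mul_pow, Real.sq_sqrt (by positivity), Real.sq_sqrt (by positivity)] at this
    _ = _ := by ring
end
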